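/- For every integer N ≥ 3 and every λ ∈ [0,1], every eigenvalue of the operator Y := W_C^λ − λ·W_C lies in the set {0, 1−λ, 2(1−λ), 3(1−λ)}, where W_C is the cluster-state witness operator and W_C^λ its modified (unsharp) version. -/

import Mathlib

open Matrix
open scoped ComplexOrder

noncomputable section

/-- The space of operators on `N` qubits: complex `2^N × 2^N` matrices, with the
`N`-fold tensor-product structure made explicit by indexing rows and columns by
functions `Fin N → Fin 2`. -/
abbrev QM (N : ℕ) := Matrix (Fin N → Fin 2) (Fin N → Fin 2) ℂ

/-- The Pauli matrix σ_x. -/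
def sigx : Matrix (Fin 2) (Fin 2) ℂ := !![0, 1; 1, 0]

/-- The Pauli matrix σ_z. -/
def sigz : Matrix (Fin 2) (Fin 2) ℂ := !![1, 0; 0, -1]

/-- The tensor (Kronecker) product `f 0 ⊗ f 1 ⊗ ⋯ ⊗ f (N-1)` of single-qubit operators. -/
def tensorAll (N : ℕ) (f : Fin N → Matrix (Fin 2) (Fin 2) ℂ) : QM N :=
  Matrix.of fun v w => ∏ i, f i (v i) (w i)

/-- The single-qubit operator `M` acting on qubit `m`, tensored with the identity
on all other qubits. -/
def site (N : ℕ) (m : Fin N) (M : Matrix (Fin 2) (Fin 2) ℂ) : QM N :=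
  tensorAll N (fun i => if i = m then M else 1)

/-- Cluster-state stabilizer generator (0-based index `m : Fin N`): σ_x on qubit `m`
and σ_z on its nearest neighbour(s); it represents the 1-based generator `S_{m+1}`. -/
def clS (N : ℕ) (m : Fin N) : QM N :=
  tensorAll N (fun i =>
    if i = m then sigx
    else if i.val + 1 = m.val ∨ m.val + 1 = i.val then sigz else 1)

/-- Factor `(I + S_{m+1})/2` of the cluster witness. -/
def clFactor (N : ℕ) (m : Fin N) : QM N := (1/2 : ℂ) • ((1 : QM N) + clS N m)

/-- Factor of the modified cluster witness: `(I + λ S_N)/2` for the last generator and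
`(I + S_{m+1})/2` otherwise. -/
def clFactorMod (N : ℕ) (lam : ℝ) (m : Fin N) : QM N :=
  if m.val = N - 1 then (1/2 : ℂ) • ((1 : QM N) + (lam : ℂ) • clS N m)
  else (1/2 : ℂ) • ((1 : QM N) + clS N m)

/-- Product of the cluster-witness factors over the 1-based indices `m+1` of parity
`r` (`r = 1` gives the even 1-based indices, `r = 0` the odd ones); the factors
pairwise commute, so the list ordering is immaterial. -/
def clProd (N : ℕ) (r : ℕ) : QM N :=
  (((List.finRange N).filter (fun m => m.val % 2 = r)).map (clFactor N)).prod

/-- The analogous parity product for the modified cluster witness; the factor carrying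
`λ` (the one for `S_N`) lies in the even product when `N` is even and in the odd one
when `N` is odd. -/
def clProdMod (N : ℕ) (lam : ℝ) (r : ℕ) : QM N :=
  (((List.finRange N).filter (fun m => m.val % 2 = r)).map (clFactorMod N lam)).prod

/-- The cluster-state genuine-multipartite-entanglement witness
`W_C = 3 I − 2 [∏_{even m}(I+S_m)/2 + ∏_{odd m}(I+S_m)/2]`. -/
def clWitness (N : ℕ) : QM N :=
  (3 : ℂ) • (1 : QM N) - (2 : ℂ) • (clProd N 1 + clProd N 0)

/-- The modified (unsharp) cluster witness `W_C^λ`, obtained from `W_C` by replacing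
the factor `(I+S_N)/2` by `(I+λS_N)/2`. -/
def clWitnessMod (N : ℕ) (lam : ℝ) : QM N :=
  (3 : ℂ) • (1 : QM N) - (2 : ℂ) • (clProdMod N lam 1 + clProdMod N lam 0)


/-!
Write `(I + λ S_N)/2 = λ (I + S_N)/2 + (1 - λ)/2 · I` in the parity product containing it. With
`P` the other parity product and `R` the product containing `S_N` with its factor `(I + S_N)/2`
deleted, this gives `W_C^λ - λ W_C = (1 - λ)(3 - 2P - R)`. The factors `(I + S_m)/2` are commuting
projections since the `S_m` commute and square to `I`, so `P` and `R` are commuting idempotents,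
and `2P + R` is annihilated by `X (X - 1) (X - 2) (X - 3)`.
-/

open Polynomial

lemma IsIdempotentElem.two_mul_add_quartic_eq_zero {R : Type*} [CommRing R] {p q : R}
    (hp : IsIdempotentElem p) (hq : IsIdempotentElem q) :
    (2 * p + q) * (2 * p + q - 1) * (2 * p + q - 2) * (2 * p + q - 3) = 0 := by
  have hE : (p + q - 2 * p * q) * (1 - (p + q - 2 * p * q)) = 0 := by
    linear_combination (-1) * hp.eq + (-1 - 4 * p * p + 4 * p) * hq.eq
  have h03 : (2 * p + q) * (2 * p + q - 3) = -2 * (p + q - 2 * p * q) := by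
    linear_combination 4 * hp.eq + hq.eq
  have h12 : (2 * p + q - 1) * (2 * p + q - 2) = 2 * (1 - (p + q - 2 * p * q)) := by
    linear_combination 4 * hp.eq + hq.eq
  calc (2 * p + q) * (2 * p + q - 1) * (2 * p + q - 2) * (2 * p + q - 3)
      = ((2 * p + q) * (2 * p + q - 3)) * ((2 * p + q - 1) * (2 * p + q - 2)) := by ring
    _ = -4 * ((p + q - 2 * p * q) * (1 - (p + q - 2 * p * q))) := by rw [h03, h12]; ring
    _ = 0 := by rw [hE, mul_zero]

open scoped IsMulCommutative in
lemma Commute.two_mul_add_quartic_eq_zero {A : Type*} [Ring A] {P Q : A} (h : Commute P Q)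
    (hP : IsIdempotentElem P) (hQ : IsIdempotentElem Q) :
    (2 * P + Q) * (2 * P + Q - 1) * (2 * P + Q - 2) * (2 * P + Q - 3) = 0 := by
  have : IsMulCommutative (Subring.closure {P, Q}) := Subring.isMulCommutative_closure <| by
    simp only [Set.mem_insert_iff, Set.mem_singleton_iff]
    rintro x (rfl | rfl) y (rfl | rfl)
    exacts [rfl, h.eq, h.symm.eq, rfl]
  let p : Subring.closure {P, Q} := ⟨P, Subring.subset_closure (by simp)⟩
  let q : Subring.closure {P, Q} := ⟨Q, Subring.subset_closure (by simp)⟩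
  have hp : IsIdempotentElem p := Subtype.ext hP.eq
  have hq : IsIdempotentElem q := Subtype.ext hQ.eq
  exact congrArg Subtype.val (hp.two_mul_add_quartic_eq_zero hq)

lemma spectrum.eval_eq_zero_of_aeval_eq_zero {𝕜 A : Type*} [Field 𝕜] [Ring A] [Algebra 𝕜 A]
    {a : A} {p : 𝕜[X]} (hp : aeval a p = 0) {μ : 𝕜} (hμ : μ ∈ spectrum 𝕜 a) :
    p.eval μ = 0 := by
  rcases subsingleton_or_nontrivial A with hA | hA
  · simp [spectrum.of_subsingleton] at hμ
  · simpa [hp, spectrum.zero_eq] using spectrum.subset_polynomial_aeval a p ⟨μ, hμ, rfl⟩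

lemma Commute.spectrum_smul_three_sub_two_mul_add_subset {𝕜 A : Type*} [Field 𝕜] [Ring A]
    [Algebra 𝕜 A] {P Q : A} (h : Commute P Q) (hP : IsIdempotentElem P)
    (hQ : IsIdempotentElem Q) (c : 𝕜) :
    spectrum 𝕜 (c • (3 - (2 * P + Q))) ⊆ {0, c, 2 * c, 3 * c} := by
  intro μ hμ
  set p : 𝕜[X] := X * (X - C c) * (X - C (2 * c)) * (X - C (3 * c))
  have hcomp : p.comp (C c * (3 - X)) = C (c ^ 4) * (X * (X - 1) * (X - 2) * (X - 3)) := by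
    simp only [p, mul_comp, sub_comp, X_comp, C_comp, C_mul, C_pow, C_ofNat, ofNat_comp]
    ring
  have hT : c • (3 - (2 * P + Q)) = aeval (2 * P + Q) (C c * (3 - X)) := by
    rw [map_mul, aeval_C, map_sub, map_ofNat, aeval_X, Algebra.smul_def]
  have hp : aeval (c • (3 - (2 * P + Q))) p = 0 := by
    rw [hT, ← aeval_comp, hcomp, map_mul, aeval_C]
    simp only [map_mul, map_sub, aeval_X, map_one, map_ofNat]
    rw [h.two_mul_add_quartic_eq_zero hP hQ, mul_zero]
  have := spectrum.eval_eq_zero_of_aeval_eq_zero hp hμ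
  simp only [p, eval_mul, eval_sub, eval_X, eval_C, mul_eq_zero, sub_eq_zero] at this
  simp only [Set.mem_insert_iff, Set.mem_singleton_iff]
  tauto

lemma isIdempotentElem_half_smul_one_add {R A : Type*} [Field R] [CharZero R] [Ring A]
    [Algebra R A] {S : A} (hS : S * S = 1) : IsIdempotentElem ((1 / 2 : R) • (1 + S)) := by
  simp only [IsIdempotentElem, smul_mul_smul, add_mul, mul_add, hS, one_mul, mul_one]
  module

lemma List.isIdempotentElem_prod_map {ι M : Type*} [Monoid M] {f : ι → M}
    (hf : ∀ i, IsIdempotentElem (f i)) (hc : ∀ i j, Commute (f i) (f j)) (l : List ι) :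
    IsIdempotentElem (l.map f).prod := by
  induction l with
  | nil => exact IsIdempotentElem.one
  | cons i l ih =>
    rw [List.map_cons, List.prod_cons]
    refine IsIdempotentElem.mul_of_commute ?_ (hf i) ih
    exact Commute.list_prod_right _ _ fun x hx => by
      obtain ⟨j, -, rfl⟩ := List.mem_map.mp hx
      exact hc i j

lemma List.commute_prod_map {ι κ M : Type*} [Monoid M] {f : ι → M} {g : κ → M}
    (h : ∀ i j, Commute (f i) (g j)) (l : List ι) (l' : List κ) :
    Commute (l.map f).prod (l'.map g).prod :=
  Commute.list_prod_left _ _ fun x hx => Commute.list_prod_right _ _ fun y hy => by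
    obtain ⟨i, -, rfl⟩ := List.mem_map.mp hx
    obtain ⟨j, -, rfl⟩ := List.mem_map.mp hy
    exact h i j

lemma List.prod_map_filter_finRange_succ {M : Type*} [Monoid M] {n : ℕ} (f : Fin (n + 1) → M)
    (p : Fin (n + 1) → Bool) :
    (((List.finRange (n + 1)).filter p).map f).prod =
      (((List.finRange n).filter (p ∘ Fin.castSucc)).map (f ∘ Fin.castSucc)).prod *
        if p (Fin.last n) then f (Fin.last n) else 1 := by
  rw [List.finRange_succ_last, List.filter_append, List.filter_map, List.map_append,
    List.map_map, List.prod_append]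
  split_ifs with hp <;> simp [hp]

section Tensor

variable {N : ℕ}

lemma tensorAll_mul (f g : Fin N → Matrix (Fin 2) (Fin 2) ℂ) :
    tensorAll N f * tensorAll N g = tensorAll N (fun i => f i * g i) := by
  ext v w
  simp only [tensorAll, Matrix.mul_apply, Matrix.of_apply]
  rw [Finset.prod_univ_sum, Fintype.piFinset_univ]
  exact Finset.sum_congr rfl fun u _ => Finset.prod_mul_distrib.symm

lemma tensorAll_one : tensorAll N (fun _ => 1) = 1 := by
  ext v w
  simp only [tensorAll, Matrix.of_apply, Matrix.one_apply]
  split_ifs with h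
  · simp [h]
  · obtain ⟨i, hi⟩ := Function.ne_iff.mp h
    exact Finset.prod_eq_zero (Finset.mem_univ i) (if_neg hi)

lemma tensorAll_smul (s : Fin N → ℂ) (f : Fin N → Matrix (Fin 2) (Fin 2) ℂ) :
    tensorAll N (fun i => s i • f i) = (∏ i, s i) • tensorAll N f := by
  ext v w
  simp [tensorAll, Finset.prod_mul_distrib]

lemma tensorAll_commute_of_mul_eq_smul_mul {f g : Fin N → Matrix (Fin 2) (Fin 2) ℂ}
    (s : Fin N → ℂ) (h : ∀ i, f i * g i = s i • (g i * f i)) (hs : ∏ i, s i = 1) :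
    Commute (tensorAll N f) (tensorAll N g) := by
  rw [Commute, SemiconjBy, tensorAll_mul, tensorAll_mul, funext h, tensorAll_smul, hs, one_smul]

end Tensor

lemma sigx_mul_self : sigx * sigx = 1 := by
  simp [sigx, Matrix.one_fin_two]

lemma sigz_mul_self : sigz * sigz = 1 := by
  simp [sigz, Matrix.one_fin_two]

lemma sigx_mul_sigz : sigx * sigz = (-1 : ℂ) • (sigz * sigx) := by
  simp [sigx, sigz]

section Cluster

variable {N : ℕ}

def clSite (N : ℕ) (m i : Fin N) : Matrix (Fin 2) (Fin 2) ℂ :=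
  if i = m then sigx else if i.val + 1 = m.val ∨ m.val + 1 = i.val then sigz else 1

lemma clS_eq_tensorAll (m : Fin N) : clS N m = tensorAll N (clSite N m) := rfl

lemma clSite_mul_self (m i : Fin N) : clSite N m i * clSite N m i = 1 := by
  unfold clSite
  split_ifs <;> simp [sigx_mul_self, sigz_mul_self]

lemma clS_mul_self (m : Fin N) : clS N m * clS N m = 1 := by
  rw [clS_eq_tensorAll, tensorAll_mul]
  simp only [clSite_mul_self]
  exact tensorAll_one

/-- Neighbouring generators anticommute at exactly two sites, so the signs cancel in
`clS_commute`. -/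
lemma clSite_mul_clSite {m m' : Fin N} (hne : m ≠ m') (i : Fin N) :
    let ε : ℂ := if m.val + 1 = m'.val ∨ m'.val + 1 = m.val then -1 else 1
    clSite N m i * clSite N m' i =
      ((if i = m then ε else 1) * (if i = m' then ε else 1)) • (clSite N m' i * clSite N m i) := by
  have hne' : m.val ≠ m'.val := fun h => hne (Fin.ext h)
  simp only [clSite, Fin.ext_iff]
  split_ifs <;> first | omega | simp [sigx_mul_sigz]

lemma clS_commute (m m' : Fin N) : Commute (clS N m) (clS N m') := by
  rcases eq_or_ne m m' with rfl | hne
  · exact Commute.refl _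
  refine tensorAll_commute_of_mul_eq_smul_mul _ (clSite_mul_clSite hne) ?_
  rw [Finset.prod_mul_distrib, Fintype.prod_ite_eq', Fintype.prod_ite_eq']
  split_ifs <;> norm_num

end Cluster

section Witness

variable {N : ℕ}

lemma isIdempotentElem_clFactor (m : Fin N) : IsIdempotentElem (clFactor N m) :=
  isIdempotentElem_half_smul_one_add (clS_mul_self m)

lemma clFactor_commute (m m' : Fin N) : Commute (clFactor N m) (clFactor N m') :=
  (((Commute.one_left _).add_left ((Commute.one_right _).add_right (clS_commute m m'))).smul_left
    _).smul_right _

def clProdExceptLast (n r : ℕ) : QM (n + 1) :=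
  (((List.finRange n).filter (fun m => m.val % 2 = r)).map
    (fun m => clFactor (n + 1) m.castSucc)).prod

variable (n r : ℕ) (lam : ℝ)

lemma isIdempotentElem_clProd : IsIdempotentElem (clProd N r) :=
  List.isIdempotentElem_prod_map isIdempotentElem_clFactor clFactor_commute _

lemma isIdempotentElem_clProdExceptLast : IsIdempotentElem (clProdExceptLast n r) :=
  List.isIdempotentElem_prod_map (fun _ => isIdempotentElem_clFactor _)
    (fun _ _ => clFactor_commute _ _) _

lemma commute_clProd_clProdExceptLast (r' : ℕ) :
    Commute (clProd (n + 1) r) (clProdExceptLast n r') := by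
  rw [clProd, clProdExceptLast]
  exact List.commute_prod_map (fun _ _ => clFactor_commute _ _) _ _

lemma clProd_succ :
    clProd (n + 1) r =
      clProdExceptLast n r * if n % 2 = r then clFactor (n + 1) (Fin.last n) else 1 := by
  rw [clProd, List.prod_map_filter_finRange_succ]
  simp [clProdExceptLast, Function.comp_def]

lemma clFactorMod_castSucc (m : Fin n) :
    clFactorMod (n + 1) lam m.castSucc = clFactor (n + 1) m.castSucc := by
  rw [clFactorMod, if_neg (by simp [m.isLt.ne]), clFactor]

lemma clProdMod_succ :
    clProdMod (n + 1) lam r =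
      clProdExceptLast n r * if n % 2 = r then clFactorMod (n + 1) lam (Fin.last n) else 1 := by
  rw [clProdMod, List.prod_map_filter_finRange_succ]
  simp [clProdExceptLast, Function.comp_def, clFactorMod_castSucc]

lemma clFactorMod_last :
    clFactorMod (n + 1) lam (Fin.last n) =
      (lam : ℂ) • clFactor (n + 1) (Fin.last n) + ((1 - lam) / 2 : ℂ) • 1 := by
  rw [clFactorMod, if_pos (by simp), clFactor]
  module

lemma clProdMod_succ_of_ne (h : n % 2 ≠ r) : clProdMod (n + 1) lam r = clProd (n + 1) r := by
  rw [clProdMod_succ, clProd_succ, if_neg h, if_neg h]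

lemma clProdMod_succ_self :
    clProdMod (n + 1) lam (n % 2) =
      (lam : ℂ) • clProd (n + 1) (n % 2) + ((1 - lam) / 2 : ℂ) • clProdExceptLast n (n % 2) := by
  rw [clProdMod_succ, clProd_succ, if_pos rfl, if_pos rfl, clFactorMod_last, mul_add,
    mul_smul_comm, mul_smul_comm, mul_one]

lemma clWitnessMod_sub_smul_clWitness :
    clWitnessMod (n + 1) lam - (lam : ℂ) • clWitness (n + 1) =
      (1 - lam : ℂ) • (3 - (2 * clProd (n + 1) ((n + 1) % 2) + clProdExceptLast n (n % 2))) := by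
  have hsum (F : ℕ → QM (n + 1)) : F 1 + F 0 = F ((n + 1) % 2) + F (n % 2) := by
    rcases Nat.mod_two_eq_zero_or_one n with h | h <;> simp [h, Nat.add_mod, add_comm]
  rw [clWitnessMod, clWitness, hsum (clProdMod (n + 1) lam), hsum (clProd (n + 1)),
    clProdMod_succ_of_ne _ _ _ (by omega), clProdMod_succ_self]
  have h3 : (3 : QM (n + 1)) = (3 : ℂ) • 1 := by simp [ofNat_smul_eq_nsmul]
  rw [h3, two_mul]
  module

end Witness

theorem cluster_modifiedWitness_sub_smul_witness_spectrum_general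
    (N : ℕ) (hN : 3 ≤ N) (lam : ℝ) :
    ∀ μ ∈ spectrum ℂ (clWitnessMod N lam - (lam : ℂ) • clWitness N),
      μ = 0 ∨ μ = 1 - (lam : ℂ) ∨ μ = 2 * (1 - (lam : ℂ)) ∨ μ = 3 * (1 - (lam : ℂ)) := by
  obtain ⟨n, rfl⟩ : ∃ n, N = n + 1 := ⟨N - 1, by omega⟩
  intro μ hμ
  rw [clWitnessMod_sub_smul_clWitness] at hμ
  simpa using (commute_clProd_clProdExceptLast n _ _).spectrum_smul_three_sub_two_mul_add_subset
    (isIdempotentElem_clProd _) (isIdempotentElem_clProdExceptLast n _) _ hμ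

/-- For every integer `N ≥ 3` and every `λ ∈ [0,1]`, every eigenvalue
of the operator `Y := W_C^λ − λ·W_C` lies in the set `{0, 1−λ, 2(1−λ), 3(1−λ)}`, where
`W_C` is the cluster-state witness operator and `W_C^λ` its modified (unsharp)
version. -/
theorem cluster_modifiedWitness_sub_smul_witness_spectrum
    (N : ℕ) (hN : 3 ≤ N) (lam : ℝ) (hlam : lam ∈ Set.Icc (0 : ℝ) 1) :
    ∀ μ ∈ spectrum ℂ (clWitnessMod N lam - (lam : ℂ) • clWitness N),
      μ = 0 ∨ μ = 1 - (lam : ℂ) ∨ μ = 2 * (1 - (lam : ℂ)) ∨ μ = 3 * (1 - (lam : ℂ)) :=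
  cluster_modifiedWitness_sub_smul_witness_spectrum_general N hN lam
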